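/- Let H be a d-uniform simple hypergraph with at least one edge. Then max{ j − i : there is a self disjoint set in H consisting of i edges whose union has j vertices } = (d − 1)·a_H, where a_H is the maximum size of an induced matching in H (that is, d'_{1,H} = (d − 1)·a_H). -/

import Mathlib

variable {V : Type*} [DecidableEq V] [Fintype V]

/-- The union of a family of edges. -/
def unionEdges (M : Finset (Finset V)) : Finset V := M.biUnion id

/-- `E` is the edge set of a simple hypergraph: every edge has at least two
vertices and no edge is contained in another distinct edge. -/
def IsSimpleHypergraph (E : Finset (Finset V)) : Prop :=
  (∀ S ∈ E, 2 ≤ S.card) ∧ ∀ S ∈ E, ∀ T ∈ E, S ⊆ T → S = T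

/-- A family `M` of edges of `E` is a semi-induced matching if no edge of `E`
outside `M` is contained in the union of the members of `M`. -/
def IsSemiInducedMatching (E M : Finset (Finset V)) : Prop :=
  M ⊆ E ∧ ∀ S ∈ E, S ∉ M → ¬ S ⊆ unionEdges M

/-- An induced matching is a semi-induced matching whose edges are pairwise disjoint. -/
def IsInducedMatching (E M : Finset (Finset V)) : Prop :=
  IsSemiInducedMatching E M ∧ ∀ S ∈ M, ∀ T ∈ M, S ≠ T → Disjoint S T

/-- A self semi-induced matching is a semi-induced matching in which no member
is contained in the union of the other members. -/
def IsSelfSemiInducedMatching (E M : Finset (Finset V)) : Prop :=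
  IsSemiInducedMatching E M ∧ ∀ S ∈ M, ¬ S ⊆ unionEdges (M.erase S)

/-- A self-contained semi-induced matching. -/
def IsSelfContainedSemiInducedMatching (E M : Finset (Finset V)) : Prop :=
  M ⊆ E ∧
  (∀ S ∈ E, S ∉ M → ¬ S ⊆ unionEdges M ∨ ∃ T ∈ M, T ⊆ S ∪ unionEdges (M.erase T)) ∧
  ∀ S ∈ M, ¬ S ⊆ unionEdges (M.erase S)

/-- A self disjoint set of edges. -/
def IsSelfDisjointSet (E M : Finset (Finset V)) : Prop :=
  M ⊆ E ∧ (∀ S ∈ M, ¬ S ⊆ unionEdges (M.erase S)) ∧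
  ∃ M₀ ⊆ M, IsInducedMatching E M₀ ∧
    ∀ S ∈ M, S ∉ M₀ → ∃ T ∈ M₀, (S \ T).card = 1

/-- A self semi-disjoint set of edges. -/
def IsSelfSemiDisjointSet (E M : Finset (Finset V)) : Prop :=
  M ⊆ E ∧ (∀ S ∈ M, ¬ S ⊆ unionEdges (M.erase S)) ∧
  ∃ M₀ ⊆ M, IsSemiInducedMatching E M₀ ∧
    ∀ S ∈ M, S ∉ M₀ → ∃ T ∈ M₀, (S \ T).card = 1

/-!
A maximum induced matching `M` is itself a self disjoint set, and its `a_H` disjoint edges cover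
`d * a_H` vertices. Conversely, in a self disjoint set `N` with distinguished induced matching `M₀`,
the edges of `M₀` cover `d * |M₀|` vertices and every other edge of `N` adds at most one vertex, so
`|⋃ N| - |N| ≤ (d - 1) * |M₀| ≤ (d - 1) * a_H`.
-/

lemma IsSimpleHypergraph.empty_notMem {α : Type*} {E : Finset (Finset α)}
    (hH : IsSimpleHypergraph E) : ∅ ∉ E :=
  fun h => by simpa using hH.1 ∅ h

section

variable {α : Type*} [DecidableEq α]

lemma mem_unionEdges {M : Finset (Finset α)} {v : α} :
    v ∈ unionEdges M ↔ ∃ S ∈ M, v ∈ S := by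
  simp [unionEdges]

lemma subset_unionEdges {M : Finset (Finset α)} {S : Finset α} (hS : S ∈ M) :
    S ⊆ unionEdges M :=
  fun _ hv => mem_unionEdges.mpr ⟨S, hS, hv⟩

lemma card_unionEdges_of_pairwiseDisjoint {M : Finset (Finset α)} {d : ℕ}
    (hM : ∀ S ∈ M, ∀ T ∈ M, S ≠ T → Disjoint S T) (hcard : ∀ S ∈ M, S.card = d) :
    (unionEdges M).card = d * M.card := by
  rw [unionEdges, Finset.card_biUnion (t := id) hM, mul_comm]
  exact Finset.sum_const_nat hcard

lemma IsInducedMatching.card_unionEdges {E M : Finset (Finset α)} {d : ℕ}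
    (hM : IsInducedMatching E M) (hUnif : ∀ S ∈ E, S.card = d) :
    (unionEdges M).card = d * M.card :=
  card_unionEdges_of_pairwiseDisjoint hM.2 fun S hS => hUnif S (hM.1.1 hS)

lemma card_unionEdges_le_of_card_sdiff_eq_one {M₀ N : Finset (Finset α)}
    (hone : ∀ S ∈ N, S ∉ M₀ → ∃ T ∈ M₀, (S \ T).card = 1) :
    (unionEdges N).card ≤ (unionEdges M₀).card + (N \ M₀).card := by
  have hnew : unionEdges N \ unionEdges M₀ ⊆
      (N \ M₀).biUnion (fun S => S \ unionEdges M₀) := by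
    intro v hv
    obtain ⟨hvN, hvM₀⟩ := Finset.mem_sdiff.mp hv
    obtain ⟨S, hS, hvS⟩ := mem_unionEdges.mp hvN
    have hSM₀ : S ∉ M₀ := fun h => hvM₀ (subset_unionEdges h hvS)
    exact Finset.mem_biUnion.mpr
      ⟨S, Finset.mem_sdiff.mpr ⟨hS, hSM₀⟩, Finset.mem_sdiff.mpr ⟨hvS, hvM₀⟩⟩
  have hfresh : ∀ S ∈ N \ M₀, (S \ unionEdges M₀).card ≤ 1 := by
    intro S hS
    obtain ⟨hSN, hSM₀⟩ := Finset.mem_sdiff.mp hS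
    obtain ⟨T, hT, hST⟩ := hone S hSN hSM₀
    exact hST ▸ Finset.card_le_card (Finset.sdiff_subset_sdiff subset_rfl (subset_unionEdges hT))
  calc (unionEdges N).card
      ≤ (unionEdges N \ unionEdges M₀).card + (unionEdges M₀).card :=
        Finset.card_le_card_sdiff_add_card
    _ ≤ (N \ M₀).card * 1 + (unionEdges M₀).card := by
        gcongr
        exact (Finset.card_le_card hnew).trans (Finset.card_biUnion_le_card_mul _ _ _ hfresh)
    _ = (unionEdges M₀).card + (N \ M₀).card := by ring

lemma isInducedMatching_empty {E : Finset (Finset α)} (hE : ∅ ∉ E) : IsInducedMatching E ∅ := by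
  refine ⟨⟨Finset.empty_subset E, fun S hS _ hsub => ?_⟩, by simp⟩
  have hS_empty : S = ∅ := Finset.subset_empty.mp (by simpa [unionEdges] using hsub)
  exact hE (hS_empty ▸ hS)

lemma IsInducedMatching.isSelfDisjointSet {E M : Finset (Finset α)} (hE : ∅ ∉ E)
    (hM : IsInducedMatching E M) : IsSelfDisjointSet E M := by
  refine ⟨hM.1.1, fun S hS hsub => ?_, M, subset_rfl, hM, fun S hS hS' => absurd hS hS'⟩
  obtain ⟨v, hv⟩ := Finset.nonempty_iff_ne_empty.mpr (fun h => hE (h ▸ hM.1.1 hS))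
  obtain ⟨T, hT, hvT⟩ := mem_unionEdges.mp (hsub hv)
  obtain ⟨hTS, hTM⟩ := Finset.mem_erase.mp hT
  exact Finset.disjoint_left.mp (hM.2 S hS T hTM (Ne.symm hTS)) hv hvT

lemma IsSelfDisjointSet.exists_card_unionEdges_sub_card_le {E N : Finset (Finset α)} {d : ℕ}
    (hN : IsSelfDisjointSet E N) (hUnif : ∀ S ∈ E, S.card = d) :
    ∃ M₀, IsInducedMatching E M₀ ∧ (unionEdges N).card - N.card ≤ (d - 1) * M₀.card := by
  obtain ⟨-, -, M₀, hM₀N, hM₀, hone⟩ := hN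
  refine ⟨M₀, hM₀, ?_⟩
  have hle := card_unionEdges_le_of_card_sdiff_eq_one hone
  rw [hM₀.card_unionEdges hUnif, Finset.card_sdiff_of_subset hM₀N] at hle
  have hM₀N' := Finset.card_le_card hM₀N
  rw [Nat.sub_one_mul]
  omega

end

theorem d1'_eq_d_sub_one_mul_inducedMatchingNumber_general
    (E : Finset (Finset V)) (d : ℕ)
    (hH : IsSimpleHypergraph E) (hUnif : ∀ S ∈ E, S.card = d) :
    sSup {n : ℕ | ∃ M, IsSelfDisjointSet E M ∧ (unionEdges M).card - M.card = n} =
      (d - 1) * sSup {n : ℕ | ∃ M, IsInducedMatching E M ∧ M.card = n} := by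
  have hbdd : BddAbove {n : ℕ | ∃ M, IsInducedMatching E M ∧ M.card = n} :=
    ⟨E.card, by rintro _ ⟨M, hM, rfl⟩; exact Finset.card_le_card hM.1.1⟩
  obtain ⟨M, hM, hMcard⟩ : sSup {n : ℕ | ∃ M, IsInducedMatching E M ∧ M.card = n} ∈ _ :=
    Nat.sSup_mem ⟨0, ∅, isInducedMatching_empty hH.empty_notMem, rfl⟩ hbdd
  refine IsGreatest.csSup_eq ⟨⟨M, hM.isSelfDisjointSet hH.empty_notMem, ?_⟩, ?_⟩
  · rw [hM.card_unionEdges hUnif, hMcard, Nat.sub_one_mul]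
  · rintro _ ⟨N, hN, rfl⟩
    obtain ⟨M₀, hM₀, hle⟩ := hN.exists_card_unionEdges_sub_card_le hUnif
    exact hle.trans (Nat.mul_le_mul_left _ (le_csSup hbdd ⟨M₀, hM₀, rfl⟩))

/-- for a `d`-uniform simple hypergraph with at least one edge,
`d'_{1,H} = (d - 1) * a_H`, where `d'_{1,H}` is the maximum of `j - i` over
self disjoint sets of type `(i, j)` and `a_H` is the maximum size of an induced
matching. -/
theorem d1'_eq_d_sub_one_mul_inducedMatchingNumber
    (E : Finset (Finset V)) (d : ℕ)
    (hH : IsSimpleHypergraph E) (hUnif : ∀ S ∈ E, S.card = d)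
    (hne : E.Nonempty) :
    sSup {n : ℕ | ∃ M, IsSelfDisjointSet E M ∧ (unionEdges M).card - M.card = n} =
      (d - 1) * sSup {n : ℕ | ∃ M, IsInducedMatching E M ∧ M.card = n} :=
  d1'_eq_d_sub_one_mul_inducedMatchingNumber_general E d hH hUnif
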